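/- arXiv:math/0109185 — 3 statements merged into one kernel-verified Lean document; each statement's English description precedes it below -/
import Mathlib

section
/- For the Gegenbauer polynomials Cₙ^γ(x) with x and n fixed, one has the finite expansion Cₙ^γ(x) = zⁿ Σ_{k=0}^n (cₖ/zᵏ) H_{n−k}(ξ)/(n−k)!, where z = √(γ(1−2x²)), ξ = xγ/z, and the cₖ are the Maclaurin coefficients of e^{−2xγw + γ(1−2x²)w²}(1−2xw+w²)^{−γ}. -/
/-!
Substituting `w ↦ z w` in the Hermite generating function at `ξ = xγ/z` gives
`Σ zᵐ Hₘ(ξ)/m! wᵐ = exp(2xγw − γ(1−2x²)w²)`, the reciprocal of the exponential factor in the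
generating function of `c`. Hence the Gegenbauer generating function is the Cauchy product of
the series `Σ cₖ wᵏ` with this rescaled Hermite series, and the formula follows by comparing
coefficients of `wⁿ`; both series converge absolutely near `0`, which justifies the product.
-/

open Filter Topology

section PowerSeries

variable {𝕜 : Type*} [NontriviallyNormedField 𝕜]

theorem summable_norm_mul_pow_of_norm_lt {a : ℕ → 𝕜} {w₀ w : 𝕜}
    (h : Summable fun k => a k * w₀ ^ k) (hw : ‖w‖ < ‖w₀‖) :
    Summable fun k => ‖a k * w ^ k‖ := by
  have hw₀ : 0 < ‖w₀‖ := (norm_nonneg w).trans_lt hw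
  obtain ⟨M, hM⟩ := h.tendsto_atTop_zero.norm.bddAbove_range
  set r := ‖w‖ / ‖w₀‖
  have hr0 : 0 ≤ r := by positivity
  refine .of_nonneg_of_le (fun k => norm_nonneg _) (fun k => ?_)
    ((summable_geometric_of_lt_one hr0 ((div_lt_one hw₀).2 hw)).mul_left M)
  have hsplit : ‖a k * w ^ k‖ = ‖a k * w₀ ^ k‖ * r ^ k := by
    simp only [r, norm_mul, norm_pow, div_pow]
    field_simp
  rw [hsplit]
  exact mul_le_mul_of_nonneg_right (hM (Set.mem_range_self k)) (by positivity)

theorem eventually_summable_norm_mul_pow {a : ℕ → 𝕜}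
    (h : ∀ᶠ w in 𝓝 0, Summable fun k => a k * w ^ k) :
    ∀ᶠ w in 𝓝 0, Summable fun k => ‖a k * w ^ k‖ := by
  obtain ⟨ε, hε, hball⟩ := Metric.eventually_nhds_iff.1 h
  obtain ⟨w₀, hw₀pos, hw₀⟩ := NormedField.exists_norm_lt 𝕜 hε
  have hsum₀ : Summable fun k => a k * w₀ ^ k := hball (by simpa using hw₀)
  filter_upwards [Metric.ball_mem_nhds (0 : 𝕜) hw₀pos] with w hw
  exact summable_norm_mul_pow_of_norm_lt hsum₀ (by simpa using hw)

theorem hasFPowerSeriesAt_ofScalars_of_eventually_hasSum {a : ℕ → 𝕜} {f : 𝕜 → 𝕜}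
    (h : ∀ᶠ w in 𝓝 0, HasSum (fun m => a m * w ^ m) (f w)) :
    HasFPowerSeriesAt f (FormalMultilinearSeries.ofScalars 𝕜 a) 0 := by
  rw [hasFPowerSeriesAt_iff]
  filter_upwards [h] with w hw
  simpa [mul_comm] using hw

theorem eq_of_eventually_hasSum_mul_pow {a b : ℕ → 𝕜} {f : 𝕜 → 𝕜}
    (ha : ∀ᶠ w in 𝓝 0, HasSum (fun m => a m * w ^ m) (f w))
    (hb : ∀ᶠ w in 𝓝 0, HasSum (fun m => b m * w ^ m) (f w)) : a = b :=
  FormalMultilinearSeries.ofScalars_series_injective 𝕜 𝕜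
    ((hasFPowerSeriesAt_ofScalars_of_eventually_hasSum ha).eq_formalMultilinearSeries
      (hasFPowerSeriesAt_ofScalars_of_eventually_hasSum hb))

variable [CompleteSpace 𝕜]

theorem eventually_hasSum_cauchyProduct_mul_pow {a b : ℕ → 𝕜} {f g : 𝕜 → 𝕜}
    (hf : ∀ᶠ w in 𝓝 0, HasSum (fun k => a k * w ^ k) (f w))
    (hg : ∀ᶠ w in 𝓝 0, HasSum (fun k => b k * w ^ k) (g w)) :
    ∀ᶠ w in 𝓝 0, HasSum
      (fun m => (∑ k ∈ Finset.range (m + 1), a k * b (m - k)) * w ^ m) (f w * g w) := by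
  filter_upwards [hf, hg, eventually_summable_norm_mul_pow (hf.mono fun _ h => h.summable),
    eventually_summable_norm_mul_pow (hg.mono fun _ h => h.summable)]
    with w hfw hgw hfn hgn
  have hprod := hasSum_sum_range_mul_of_summable_norm hfn hgn
  rw [hfw.tsum_eq, hgw.tsum_eq] at hprod
  refine hprod.congr_fun fun m => ?_
  rw [Finset.sum_mul]
  refine Finset.sum_congr rfl fun k hk => ?_
  rw [mul_mul_mul_comm, ← pow_add, Nat.add_sub_cancel' (Finset.mem_range_succ_iff.1 hk)]

end PowerSeries

theorem hasSum_hermite_mul_pow_rescaled {H : ℕ → ℂ → ℂ}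
    (hH : ∀ y w : ℂ, HasSum (fun m => H m y / (Nat.factorial m : ℂ) * w ^ m)
      (Complex.exp (2 * y * w - w ^ 2)))
    (y z w : ℂ) :
    HasSum (fun m => z ^ m * H m y / (Nat.factorial m : ℂ) * w ^ m)
      (Complex.exp (2 * y * z * w - z ^ 2 * w ^ 2)) := by
  convert hH y (z * w) using 1
  · ext m
    ring
  · ring_nf

/-- Finite Hermite expansion of Gegenbauer polynomials:
`Cₙ^γ(x) = zⁿ Σ_{k=0}^n (cₖ/zᵏ) H_{n-k}(ξ)/(n-k)!` with
`z = √(γ(1-2x²))`, `ξ = xγ/z`. -/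
theorem stmt_4 (γ x : ℂ) (hγ : γ ≠ 0) (hx : 1 - 2 * x ^ 2 ≠ 0)
    (C : ℕ → ℂ)
    (hC : ∀ᶠ w in 𝓝 (0:ℂ), HasSum (fun m => C m * w ^ m)
      ((1 - 2 * x * w + w ^ 2) ^ (-γ)))
    (z : ℂ) (hz : z ^ 2 = γ * (1 - 2 * x ^ 2))
    (c : ℕ → ℂ)
    (hc : ∀ᶠ w in 𝓝 (0:ℂ), HasSum (fun k => c k * w ^ k)
      (Complex.exp (-(2 * x * γ) * w + γ * (1 - 2 * x ^ 2) * w ^ 2) *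
        (1 - 2 * x * w + w ^ 2) ^ (-γ)))
    (H : ℕ → ℂ → ℂ)
    (hH : ∀ y w : ℂ, HasSum (fun m => H m y / (Nat.factorial m : ℂ) * w ^ m)
      (Complex.exp (2 * y * w - w ^ 2)))
    (n : ℕ) :
    C n = z ^ n * ∑ k ∈ Finset.range (n + 1),
      c k / z ^ k * H (n - k) (x * γ / z) / (Nat.factorial (n - k) : ℂ) := by
  have hz0 : z ≠ 0 := by
    rintro rfl
    exact mul_ne_zero hγ hx (by simpa using hz.symm)
  have hhermite : ∀ᶠ w in 𝓝 (0:ℂ),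
      HasSum (fun m => z ^ m * H m (x * γ / z) / (Nat.factorial m : ℂ) * w ^ m)
        (Complex.exp (2 * x * γ * w - γ * (1 - 2 * x ^ 2) * w ^ 2)) := by
    refine .of_forall fun w => ?_
    convert hasSum_hermite_mul_pow_rescaled hH (x * γ / z) z w using 2
    rw [hz]
    field_simp
  have hgegenbauer := eventually_hasSum_cauchyProduct_mul_pow hc hhermite
  have hexp_cancel : ∀ w : ℂ,
      Complex.exp (-(2 * x * γ) * w + γ * (1 - 2 * x ^ 2) * w ^ 2) *
          (1 - 2 * x * w + w ^ 2) ^ (-γ) *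
          Complex.exp (2 * x * γ * w - γ * (1 - 2 * x ^ 2) * w ^ 2) =
        (1 - 2 * x * w + w ^ 2) ^ (-γ) := fun w => by
    rw [mul_right_comm, ← Complex.exp_add, show (_ : ℂ) + _ = 0 by ring, Complex.exp_zero,
      one_mul]
  simp only [hexp_cancel] at hgegenbauer
  rw [congrFun (eq_of_eventually_hasSum_mul_pow hC hgegenbauer) n, Finset.mul_sum]
  refine Finset.sum_congr rfl fun k hk => ?_
  rw [← pow_mul_pow_sub z (Finset.mem_range_succ_iff.1 hk)]
  field_simp
end

section
/- With the Laguerre-expansion setup (coefficients cₖ defined by e^{−Aw/(Bw−1)}(1−Bw)^{C+1}F(x,w) = Σ cₖwᵏ), if A = B(C+1) − p₁ and C = (p₁² − 2p₂ + 2p₁B − B²)/B², then c₁ = c₂ = 0 and c₃ = p₃ − p₂p₁ + (1/3)(p₁B² + p₁³ + 2p₁²B − 4p₂B). -/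
/-!
The weight `E w = exp (-A w / (B w - 1)) (1 - B w) ^ (C + 1)` satisfies `E' = q E` with
`q w = A / (1 - B w) ^ 2 - B (C + 1) / (1 - B w)`, whose Taylor coefficients
`(A (k + 1) - B (C + 1)) B ^ k` come from the geometric series. Differentiating `E' = q E` gives the
first three derivatives of `E` at `0`; Leibniz's rule for `E f` then expresses `c₁, c₂, c₃` through
`p₁, p₂, p₃`, and the two relations between `A, B, C, p₁, p₂` make `c₁` and `c₂` vanish.
-/

open Filter Topology Finset

section TaylorCoefficients

variable {𝕜 : Type*} [NontriviallyNormedField 𝕜]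

theorem hasFPowerSeriesAt_ofScalars_of_hasSum {a : ℕ → 𝕜} {g : 𝕜 → 𝕜}
    (h : ∀ᶠ w in 𝓝 0, HasSum (fun k => a k * w ^ k) (g w)) :
    HasFPowerSeriesAt g (FormalMultilinearSeries.ofScalars 𝕜 a) 0 := by
  rw [hasFPowerSeriesAt_iff]
  filter_upwards [h] with w hw
  simpa [FormalMultilinearSeries.coeff_ofScalars, smul_eq_mul, mul_comm] using hw

theorem iteratedDeriv_eq_factorial_mul_of_hasSum [CompleteSpace 𝕜] {a : ℕ → 𝕜} {g : 𝕜 → 𝕜}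
    (h : ∀ᶠ w in 𝓝 0, HasSum (fun k => a k * w ^ k) (g w)) (n : ℕ) :
    iteratedDeriv n g 0 = n.factorial * a n := by
  obtain ⟨r, hr⟩ := hasFPowerSeriesAt_ofScalars_of_hasSum h
  rw [iteratedDeriv_eq_iteratedFDeriv, ← hr.factorial_smul 1 n, nsmul_eq_mul]
  simp [FormalMultilinearSeries.ofScalars]

theorem iteratedDeriv_succ_eq_sum_of_deriv_eventuallyEq_mul {𝔸 : Type*} [NormedRing 𝔸]
    [NormedAlgebra 𝕜 𝔸] {E q : 𝕜 → 𝔸} {x : 𝕜} {n : ℕ}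
    (hE : deriv E =ᶠ[𝓝 x] q * E) (hq : ContDiffAt 𝕜 n q x) (hEc : ContDiffAt 𝕜 n E x) :
    iteratedDeriv (n + 1) E x = ∑ i ∈ range (n + 1),
      n.choose i * iteratedDeriv i q x * iteratedDeriv (n - i) E x := by
  rw [iteratedDeriv_succ', hE.iteratedDeriv_eq, iteratedDeriv_mul hq hEc]

theorem iteratedDeriv_one_two_three_of_deriv_eventuallyEq_mul [CompleteSpace 𝕜] {E q : 𝕜 → 𝕜}
    {x : 𝕜} (hE : deriv E =ᶠ[𝓝 x] q * E) (hq : AnalyticAt 𝕜 q x) (hEa : AnalyticAt 𝕜 E x) :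
    iteratedDeriv 1 E x = q x * E x ∧
    iteratedDeriv 2 E x = (iteratedDeriv 1 q x + q x ^ 2) * E x ∧
    iteratedDeriv 3 E x =
      (iteratedDeriv 2 q x + 3 * q x * iteratedDeriv 1 q x + q x ^ 3) * E x := by
  have hrec (n : ℕ) := iteratedDeriv_succ_eq_sum_of_deriv_eventuallyEq_mul (n := n) hE
    hq.contDiffAt hEa.contDiffAt
  have h1 := hrec 0
  have h2 := hrec 1
  have h3 := hrec 2
  simp only [sum_range_succ, sum_range_zero] at h1 h2 h3
  norm_num at h1 h2 h3
  simp only [iteratedDeriv_one]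
  refine ⟨h1, ?_, ?_⟩
  · rw [h2, h1]; ring
  · rw [h3, h2, h1]; ring

end TaylorCoefficients

theorem eventually_one_sub_mul_mem_slitPlane (B : ℂ) :
    ∀ᶠ w in 𝓝 (0 : ℂ), 1 - B * w ∈ Complex.slitPlane := by
  have hcont : Continuous fun w : ℂ => 1 - B * w := by fun_prop
  exact (hcont.tendsto 0).eventually
    (Complex.isOpen_slitPlane.mem_nhds (by simp [Complex.mem_slitPlane_iff]))

noncomputable def laguerreWeight (A B C w : ℂ) : ℂ :=
  Complex.exp (-A * w / (B * w - 1)) * (1 - B * w) ^ (C + 1)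

noncomputable def laguerreWeightLogDeriv (A B C w : ℂ) : ℂ :=
  A / (1 - B * w) ^ 2 - B * (C + 1) / (1 - B * w)

section LaguerreWeight

variable (A B C : ℂ)

theorem laguerreWeight_zero : laguerreWeight A B C 0 = 1 := by
  simp [laguerreWeight]

theorem hasDerivAt_laguerreWeight {w : ℂ} (hw : 1 - B * w ∈ Complex.slitPlane) :
    HasDerivAt (laguerreWeight A B C)
      (laguerreWeightLogDeriv A B C w * laguerreWeight A B C w) w := by
  have hne : 1 - B * w ≠ 0 := Complex.slitPlane_ne_zero hw
  have hne' : B * w - 1 ≠ 0 := by rwa [← neg_sub, neg_ne_zero]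
  have hfrac : HasDerivAt (fun w : ℂ => -A * w / (B * w - 1)) (A / (1 - B * w) ^ 2) w := by
    refine (((hasDerivAt_id' w).const_mul (-A)).div
      (((hasDerivAt_id' w).const_mul B).sub_const 1) hne').congr_deriv ?_
    field_simp
    ring
  have hpow : HasDerivAt (fun w : ℂ => (1 - B * w) ^ (C + 1))
      ((C + 1) * (1 - B * w) ^ C * -B) w := by
    simpa using (((hasDerivAt_id w).const_mul B).const_sub 1).cpow_const (c := C + 1) hw
  refine (hfrac.cexp.mul hpow).congr_deriv ?_
  unfold laguerreWeight laguerreWeightLogDeriv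
  rw [Complex.cpow_add _ _ hne, Complex.cpow_one]
  generalize Complex.exp _ = E
  generalize (1 - B * w) ^ C = P
  field_simp
  ring

theorem deriv_laguerreWeight_eventuallyEq :
    deriv (laguerreWeight A B C) =ᶠ[𝓝 0]
      laguerreWeightLogDeriv A B C * laguerreWeight A B C := by
  filter_upwards [eventually_one_sub_mul_mem_slitPlane B] with w hw
  exact (hasDerivAt_laguerreWeight A B C hw).deriv

theorem analyticAt_laguerreWeight : AnalyticAt ℂ (laguerreWeight A B C) 0 :=
  DifferentiableOn.analyticAt (s := {w | 1 - B * w ∈ Complex.slitPlane})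
    (fun _ hw => (hasDerivAt_laguerreWeight A B C hw).differentiableAt.differentiableWithinAt)
    (eventually_one_sub_mul_mem_slitPlane B)

theorem hasSum_laguerreWeightLogDeriv {w : ℂ} (hw : ‖B * w‖ < 1) :
    HasSum (fun k : ℕ => (A * (k + 1) - B * (C + 1)) * B ^ k * w ^ k)
      (laguerreWeightLogDeriv A B C w) := by
  have hne : 1 - B * w ≠ 0 := sub_ne_zero.mpr fun h => by simp [← h] at hw
  have hterm : (fun k : ℕ => (A * (k + 1) - B * (C + 1)) * B ^ k * w ^ k)
      = fun k : ℕ => A * (k * (B * w) ^ k) + (A - B * (C + 1)) * (B * w) ^ k := by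
    funext k
    rw [mul_pow]
    ring
  have hval : laguerreWeightLogDeriv A B C w
      = A * (B * w / (1 - B * w) ^ 2) + (A - B * (C + 1)) * (1 - B * w)⁻¹ := by
    unfold laguerreWeightLogDeriv
    field_simp
    ring
  rw [hterm, hval]
  exact ((hasSum_coe_mul_geometric_of_norm_lt_one hw).mul_left A).add
    ((hasSum_geometric_of_norm_lt_one hw).mul_left (A - B * (C + 1)))

theorem eventually_hasSum_laguerreWeightLogDeriv :
    ∀ᶠ w in 𝓝 0, HasSum (fun k : ℕ => ((A * (k + 1) - B * (C + 1)) * B ^ k) * w ^ k)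
      (laguerreWeightLogDeriv A B C w) := by
  have hcont : Continuous fun w : ℂ => ‖B * w‖ := by fun_prop
  filter_upwards [(hcont.tendsto 0).eventually (eventually_lt_nhds (show ‖B * 0‖ < 1 by simp))]
    with w hw
  exact hasSum_laguerreWeightLogDeriv A B C hw

theorem iteratedDeriv_laguerreWeight_zero :
    iteratedDeriv 1 (laguerreWeight A B C) 0 = A - B * (C + 1) ∧
    iteratedDeriv 2 (laguerreWeight A B C) 0 = (2 * A - B * (C + 1)) * B + (A - B * (C + 1)) ^ 2 ∧
    iteratedDeriv 3 (laguerreWeight A B C) 0 = 2 * (3 * A - B * (C + 1)) * B ^ 2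
      + 3 * (A - B * (C + 1)) * (2 * A - B * (C + 1)) * B + (A - B * (C + 1)) ^ 3 := by
  have hq (k : ℕ) := iteratedDeriv_eq_factorial_mul_of_hasSum
    (eventually_hasSum_laguerreWeightLogDeriv A B C) k
  have hq0 : laguerreWeightLogDeriv A B C 0 = A - B * (C + 1) := by
    simp [laguerreWeightLogDeriv]
  have hq1 : iteratedDeriv 1 (laguerreWeightLogDeriv A B C) 0 = (2 * A - B * (C + 1)) * B := by
    rw [hq]; push_cast [Nat.factorial]; ring
  have hq2 : iteratedDeriv 2 (laguerreWeightLogDeriv A B C) 0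
      = 2 * (3 * A - B * (C + 1)) * B ^ 2 := by
    rw [hq]; push_cast [Nat.factorial]; ring
  have hqA := (hasFPowerSeriesAt_ofScalars_of_hasSum
    (eventually_hasSum_laguerreWeightLogDeriv A B C)).analyticAt
  obtain ⟨h1, h2, h3⟩ := iteratedDeriv_one_two_three_of_deriv_eventuallyEq_mul
    (deriv_laguerreWeight_eventuallyEq A B C) hqA (analyticAt_laguerreWeight A B C)
  rw [h1, h2, h3, hq0, hq1, hq2, laguerreWeight_zero]
  exact ⟨by ring, by ring, by ring⟩

end LaguerreWeight

/-- With `A = B(C+1) − p₁` and `C = (p₁² − 2p₂ + 2p₁B − B²)/B²` one has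
`c₁ = c₂ = 0` and `c₃ = p₃ − p₂p₁ + (p₁B² + p₁³ + 2p₁²B − 4p₂B)/3`. -/
theorem stmt_11 (f : ℂ → ℂ) (p : ℕ → ℂ)
    (hF : ∀ᶠ w in 𝓝 (0:ℂ), HasSum (fun m => p m * w ^ m) (f w))
    (hp0 : p 0 = 1)
    (A B C : ℂ) (hB : B ≠ 0)
    (hA : A = B * (C + 1) - p 1)
    (hC : C = (p 1 ^ 2 - 2 * p 2 + 2 * p 1 * B - B ^ 2) / B ^ 2)
    (c : ℕ → ℂ)
    (hc : ∀ᶠ w in 𝓝 (0:ℂ), HasSum (fun k => c k * w ^ k)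
      (Complex.exp (-A * w / (B * w - 1)) * (1 - B * w) ^ (C + 1) * f w)) :
    c 1 = 0 ∧ c 2 = 0 ∧
    c 3 = p 3 - p 2 * p 1 +
      (p 1 * B ^ 2 + p 1 ^ 3 + 2 * p 1 ^ 2 * B - 4 * p 2 * B) / 3 := by
  have hfA := (hasFPowerSeriesAt_ofScalars_of_hasSum hF).analyticAt
  have hEA := analyticAt_laguerreWeight A B C
  have hcoeff (k : ℕ) : (k.factorial : ℂ) * c k = ∑ i ∈ range (k + 1),
      k.choose i * iteratedDeriv i (laguerreWeight A B C) 0 * iteratedDeriv (k - i) f 0 := by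
    rw [← iteratedDeriv_eq_factorial_mul_of_hasSum (g := fun w => laguerreWeight A B C w * f w) hc,
      iteratedDeriv_fun_mul hEA.contDiffAt hfA.contDiffAt]
  obtain ⟨hE1, hE2, hE3⟩ := iteratedDeriv_laguerreWeight_zero A B C
  have hf (k : ℕ) := iteratedDeriv_eq_factorial_mul_of_hasSum hF k
  have hCB : (C + 1) * B ^ 2 = p 1 ^ 2 - 2 * p 2 + 2 * p 1 * B := by
    rw [hC]; field_simp; ring
  have hc1 := hcoeff 1
  have hc2 := hcoeff 2
  have hc3 := hcoeff 3
  simp only [sum_range_succ, sum_range_zero, iteratedDeriv_zero, laguerreWeight_zero, hE1, hE2, hE3,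
    hf, hp0] at hc1 hc2 hc3
  norm_num at hc1 hc2 hc3
  subst hA
  refine ⟨?_, ?_, ?_⟩
  · linear_combination hc1
  · linear_combination hc2 / 2 + hCB / 2
  · linear_combination hc3 / 6 + (2 * B / 3) * hCB
end

section
/- For the Jacobi polynomials Pₙ^{(α,β)}(x) with generating function 2^{α+β}(1+R−w)^{−α}(1+R+w)^{−β}/R = Σ_{n≥0} Pₙ^{(α,β)}(x)wⁿ, where R = √(1−2xw+w²), take B = 1, C = α, A = ½(α+β+2)(1−x). Then the coefficients cₖ of e^{−Aw/(w−1)}(1−w)^{α+1}F(x,w) satisfy c₀ = 1, c₁ = 0, and c₂ = (1/8)[−α + 3β − 2(α+3β+4)x + (3α+3β+8)x²]. -/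
open Filter Topology

/-!
The `c k` are the Taylor coefficients at `0` of `g = invLaguerreGenFun α A · genFun α β x`, so
`c k = g⁽ᵏ⁾(0) / k!`. Each factor of `g` is an exponential or a complex power of a function taking
values in the slit plane near `0`, so `g' = g ℓ` there, with an explicit logarithmic derivative
`ℓ` in which the constant `2^(α+β)` no longer appears. Hence `g(0) = 1`, `g'(0) = ℓ(0)` and
`g''(0) = ℓ(0)² + ℓ'(0)`, and it only remains to compute `ℓ(0)` and `ℓ'(0)`.
-/

section LogDeriv

variable {𝕜 : Type*} [NontriviallyNormedField 𝕜] {f g ℓ : 𝕜 → 𝕜} {a b z : 𝕜}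

def HasLogDerivAt (f : 𝕜 → 𝕜) (a z : 𝕜) : Prop := HasDerivAt f (f z * a) z

theorem HasLogDerivAt.hasDerivAt (hf : HasLogDerivAt f a z) : HasDerivAt f (f z * a) z := hf

theorem HasLogDerivAt.congr_logDeriv (hf : HasLogDerivAt f a z) (h : a = b) :
    HasLogDerivAt f b z :=
  h ▸ hf

theorem HasLogDerivAt.mul (hf : HasLogDerivAt f a z) (hg : HasLogDerivAt g b z) :
    HasLogDerivAt (fun w => f w * g w) (a + b) z :=
  (hf.hasDerivAt.mul hg.hasDerivAt).congr_deriv (by ring)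

theorem HasLogDerivAt.div (hf : HasLogDerivAt f a z) (hg : HasLogDerivAt g b z) (hgz : g z ≠ 0) :
    HasLogDerivAt (fun w => f w / g w) (a - b) z :=
  (hf.hasDerivAt.div hg.hasDerivAt hgz).congr_deriv (by field_simp)

theorem HasLogDerivAt.const_mul (c : 𝕜) (hf : HasLogDerivAt f a z) :
    HasLogDerivAt (fun w => c * f w) a z :=
  (hf.hasDerivAt.const_mul c).congr_deriv (mul_assoc _ _ _).symm

theorem iteratedDeriv_one_of_hasLogDerivAt (hg : HasLogDerivAt g a z) :
    iteratedDeriv 1 g z = g z * a := by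
  rw [iteratedDeriv_one, hg.hasDerivAt.deriv]

theorem iteratedDeriv_two_of_hasLogDerivAt {ℓ' : 𝕜} (hg : ∀ᶠ w in 𝓝 z, HasLogDerivAt g (ℓ w) w)
    (hℓ : HasDerivAt ℓ ℓ' z) : iteratedDeriv 2 g z = g z * (ℓ z ^ 2 + ℓ') := by
  have hderiv : deriv g =ᶠ[𝓝 z] fun w => g w * ℓ w := hg.mono fun w hw => hw.hasDerivAt.deriv
  have hgz := hg.self_of_nhds.hasDerivAt
  rw [iteratedDeriv_succ, iteratedDeriv_one, hderiv.deriv_eq, (hgz.fun_mul hℓ).deriv]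
  ring

end LogDeriv

theorem HasDerivAt.hasLogDerivAt_cexp {f : ℂ → ℂ} {f' z : ℂ} (hf : HasDerivAt f f' z) :
    HasLogDerivAt (fun w => Complex.exp (f w)) f' z :=
  hf.cexp

theorem HasDerivAt.hasLogDerivAt_cpow_const {f : ℂ → ℂ} {f' z : ℂ} (c : ℂ) (hf : HasDerivAt f f' z)
    (hz : f z ∈ Complex.slitPlane) :
    HasLogDerivAt (fun w => f w ^ c) (c * f' / f z) z := by
  have hz0 := Complex.slitPlane_ne_zero hz
  refine (hf.cpow_const hz).congr_deriv ?_
  rw [Complex.cpow_sub _ _ hz0, Complex.cpow_one]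
  field_simp

theorem coeff_eq_iteratedDeriv_div_factorial {𝕜 : Type*} [NontriviallyNormedField 𝕜]
    [CompleteSpace 𝕜] [CharZero 𝕜] {f : 𝕜 → 𝕜} {c : ℕ → 𝕜}
    (hf : ∀ᶠ w in 𝓝 0, HasSum (fun k => c k * w ^ k) (f w)) (n : ℕ) :
    c n = iteratedDeriv n f 0 / n.factorial := by
  have hp : HasFPowerSeriesAt f (FormalMultilinearSeries.ofScalars 𝕜 c) 0 := by
    rw [hasFPowerSeriesAt_iff]
    simpa [FormalMultilinearSeries.coeff_ofScalars, mul_comm] using hf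
  have h := hp.eq_formalMultilinearSeries hp.analyticAt.hasFPowerSeriesAt
  exact congrFun (FormalMultilinearSeries.ofScalars_series_injective _ _ h) n

namespace Jacobi

open Complex

variable (α β x A : ℂ) {w : ℂ}

noncomputable section

def disc (x w : ℂ) : ℂ := 1 - 2 * x * w + w ^ 2

-- `R` in the paper
def sqrtDisc (x w : ℂ) : ℂ := disc x w ^ ((1:ℂ)/2)

def genFun (α β x w : ℂ) : ℂ :=
  2 ^ (α + β) * (1 + sqrtDisc x w - w) ^ (-α) * (1 + sqrtDisc x w + w) ^ (-β) / sqrtDisc x w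

-- `R` in the paper
def sqrtDiscLogDeriv (x w : ℂ) : ℂ := (w - x) / disc x w

def genFunLogDeriv (α β x w : ℂ) : ℂ :=
  -α * (sqrtDisc x w * sqrtDiscLogDeriv x w - 1) / (1 + sqrtDisc x w - w) +
    -β * (sqrtDisc x w * sqrtDiscLogDeriv x w + 1) / (1 + sqrtDisc x w + w) -
    sqrtDiscLogDeriv x w

-- The reciprocal of the Laguerre generating function `(1 - w)^(-α-1) exp (-A w / (1 - w))`.
def invLaguerreGenFun (α A w : ℂ) : ℂ := exp (-A * w / (w - 1)) * (1 - w) ^ (α + 1)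

def invLaguerreGenFunLogDeriv (α A w : ℂ) : ℂ := A / (w - 1) ^ 2 - (α + 1) / (1 - w)

@[simp] theorem disc_zero : disc x 0 = 1 := by simp [disc]

@[simp] theorem sqrtDisc_zero : sqrtDisc x 0 = 1 := by simp [sqrtDisc]

@[simp] theorem sqrtDiscLogDeriv_zero : sqrtDiscLogDeriv x 0 = -x := by simp [sqrtDiscLogDeriv]

theorem genFun_zero : genFun α β x 0 = 1 := by
  rw [genFun, sqrtDisc_zero]
  norm_num [mul_assoc, ← cpow_add _ _ two_ne_zero]

theorem invLaguerreGenFun_zero : invLaguerreGenFun α A 0 = 1 := by simp [invLaguerreGenFun]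

theorem invLaguerreGenFunLogDeriv_zero : invLaguerreGenFunLogDeriv α A 0 = A - (α + 1) := by
  simp [invLaguerreGenFunLogDeriv]

theorem genFunLogDeriv_zero :
    genFunLogDeriv α β x 0 = α * (x + 1) / 2 + β * (x - 1) / 2 + x := by
  simp only [genFunLogDeriv, sqrtDisc_zero, sqrtDiscLogDeriv_zero]
  ring

theorem hasDerivAt_disc (w : ℂ) : HasDerivAt (disc x) (2 * w - 2 * x) w := by
  have h := (((hasDerivAt_id w).const_mul (2 * x)).const_sub 1).add (hasDerivAt_pow 2 w)
  exact h.congr_deriv (by ring)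

theorem hasLogDerivAt_sqrtDisc (hw : disc x w ∈ slitPlane) :
    HasLogDerivAt (sqrtDisc x) (sqrtDiscLogDeriv x w) w :=
  ((hasDerivAt_disc x w).hasLogDerivAt_cpow_const _ hw).congr_deriv (by
    rw [sqrtDiscLogDeriv, sqrtDisc]; ring)

theorem hasLogDerivAt_genFun (hq : disc x w ∈ slitPlane) (hm : 1 + sqrtDisc x w - w ∈ slitPlane)
    (hp : 1 + sqrtDisc x w + w ∈ slitPlane) :
    HasLogDerivAt (genFun α β x) (genFunLogDeriv α β x w) w := by
  have hR := hasLogDerivAt_sqrtDisc x hq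
  have hRne : sqrtDisc x w ≠ 0 := by simp [sqrtDisc, cpow_eq_zero_iff, slitPlane_ne_zero hq]
  have hM := ((hR.hasDerivAt.const_add 1).fun_sub (hasDerivAt_id' w)).hasLogDerivAt_cpow_const
    (-α) hm
  have hP := ((hR.hasDerivAt.const_add 1).fun_add (hasDerivAt_id' w)).hasLogDerivAt_cpow_const
    (-β) hp
  exact ((hM.const_mul _).mul hP).div hR hRne

theorem eventually_hasLogDerivAt_genFun :
    ∀ᶠ w in 𝓝 0, HasLogDerivAt (genFun α β x) (genFunLogDeriv α β x w) w := by
  have hev {f : ℂ → ℂ} (hf : ContinuousAt f 0) (h0 : f 0 ∈ slitPlane) :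
      ∀ᶠ w in 𝓝 0, f w ∈ slitPlane :=
    hf.eventually_mem (isOpen_slitPlane.mem_nhds h0)
  have hR : ContinuousAt (sqrtDisc x) 0 :=
    (hasLogDerivAt_sqrtDisc x (by simp)).hasDerivAt.continuousAt
  filter_upwards [hev (hasDerivAt_disc x 0).continuousAt (by simp),
    hev ((hR.const_add 1).sub continuousAt_id) (by norm_num),
    hev ((hR.const_add 1).add continuousAt_id) (by norm_num)] with w hq hm hp
  exact hasLogDerivAt_genFun α β x hq hm hp

theorem hasLogDerivAt_invLaguerreGenFun (hw : 1 - w ∈ slitPlane) :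
    HasLogDerivAt (invLaguerreGenFun α A) (invLaguerreGenFunLogDeriv α A w) w := by
  have hw1 : w - 1 ≠ 0 := sub_ne_zero.2 (sub_ne_zero.1 (slitPlane_ne_zero hw)).symm
  have hE := (((hasDerivAt_id' w).const_mul (-A)).fun_div ((hasDerivAt_id' w).sub_const 1)
    hw1).hasLogDerivAt_cexp
  have hL := ((hasDerivAt_id' w).const_sub 1).hasLogDerivAt_cpow_const (α + 1) hw
  refine (hE.mul hL).congr_logDeriv ?_
  rw [invLaguerreGenFunLogDeriv]
  field_simp
  ring

theorem eventually_hasLogDerivAt_invLaguerreGenFun :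
    ∀ᶠ w in 𝓝 0, HasLogDerivAt (invLaguerreGenFun α A) (invLaguerreGenFunLogDeriv α A w) w := by
  have h : ∀ᶠ w in 𝓝 (0:ℂ), 1 - w ∈ slitPlane :=
    (continuous_const.sub continuous_id).continuousAt.eventually_mem
      (isOpen_slitPlane.mem_nhds (by norm_num))
  exact h.mono fun w hw => hasLogDerivAt_invLaguerreGenFun α A hw

theorem hasDerivAt_genFunLogDeriv_zero :
    HasDerivAt (genFunLogDeriv α β x)
      (-α * (1 - 2 * x - 3 * x ^ 2) / 4 - β * (1 + 2 * x - 3 * x ^ 2) / 4 + 2 * x ^ 2 - 1) 0 := by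
  have hρ : HasDerivAt (sqrtDiscLogDeriv x) (1 - 2 * x ^ 2) 0 :=
    (((hasDerivAt_id' 0).sub_const x).fun_div (hasDerivAt_disc x 0) (by simp)).congr_deriv
      (by simp only [disc_zero]; ring)
  have hR : HasDerivAt (sqrtDisc x) (-x) 0 :=
    (hasLogDerivAt_sqrtDisc x (by simp)).hasDerivAt.congr_deriv (by simp)
  have hRρ : HasDerivAt (fun w => sqrtDisc x w * sqrtDiscLogDeriv x w) (1 - x ^ 2) 0 :=
    (hR.fun_mul hρ).congr_deriv (by simp only [sqrtDisc_zero, sqrtDiscLogDeriv_zero]; ring)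
  have hm := ((hR.const_add 1).fun_sub (hasDerivAt_id' 0))
  have hp := ((hR.const_add 1).fun_add (hasDerivAt_id' 0))
  have h := ((((hRρ.sub_const 1).const_mul (-α)).fun_div hm (by norm_num)).fun_add
    (((hRρ.add_const 1).const_mul (-β)).fun_div hp (by norm_num))).fun_sub hρ
  refine h.congr_deriv ?_
  simp only [sqrtDisc_zero, sqrtDiscLogDeriv_zero]
  field_simp
  ring

theorem hasDerivAt_invLaguerreGenFunLogDeriv_zero :
    HasDerivAt (invLaguerreGenFunLogDeriv α A) (2 * A - (α + 1)) 0 := by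
  have h := ((hasDerivAt_const (0:ℂ) A).fun_div (((hasDerivAt_id' 0).sub_const 1).fun_pow 2)
    (by norm_num)).fun_sub
    ((hasDerivAt_const (0:ℂ) (α + 1)).fun_div ((hasDerivAt_id' 0).const_sub 1) (by norm_num))
  exact h.congr_deriv (by ring)

end

end Jacobi

open Jacobi in
theorem stmt_16_general (α β x : ℂ)
    (A : ℂ) (hA : A = (α + β + 2) * (1 - x) / 2)
    (c : ℕ → ℂ)
    (hc : ∀ᶠ w in 𝓝 (0:ℂ), HasSum (fun k => c k * w ^ k)
      (Complex.exp (-A * w / (w - 1)) * (1 - w) ^ (α + 1) *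
        ((2:ℂ) ^ (α + β) *
          (1 + (1 - 2 * x * w + w ^ 2) ^ ((1:ℂ)/2) - w) ^ (-α) *
          (1 + (1 - 2 * x * w + w ^ 2) ^ ((1:ℂ)/2) + w) ^ (-β) /
          (1 - 2 * x * w + w ^ 2) ^ ((1:ℂ)/2)))) :
    c 0 = 1 ∧ c 1 = 0 ∧
    c 2 = (-α + 3 * β - 2 * (α + 3 * β + 4) * x + (3 * α + 3 * β + 8) * x ^ 2) / 8 := by
  have hcoeff := coeff_eq_iteratedDeriv_div_factorial
    (f := fun w => invLaguerreGenFun α A w * genFun α β x w) hc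
  have hlog := ((eventually_hasLogDerivAt_invLaguerreGenFun α A).and
    (eventually_hasLogDerivAt_genFun α β x)).mono fun _ h => h.1.mul h.2
  have hℓ := (hasDerivAt_invLaguerreGenFunLogDeriv_zero α A).fun_add
    (hasDerivAt_genFunLogDeriv_zero α β x)
  have hg0 : invLaguerreGenFun α A 0 * genFun α β x 0 = 1 := by
    rw [invLaguerreGenFun_zero, genFun_zero, one_mul]
  refine ⟨?_, ?_, ?_⟩
  · rw [hcoeff 0, iteratedDeriv_zero, hg0]
    simp
  · rw [hcoeff 1, iteratedDeriv_one_of_hasLogDerivAt hlog.self_of_nhds, hg0,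
      invLaguerreGenFunLogDeriv_zero, genFunLogDeriv_zero, hA, Nat.factorial_one]
    push_cast
    ring
  · rw [hcoeff 2, iteratedDeriv_two_of_hasLogDerivAt hlog hℓ, hg0,
      invLaguerreGenFunLogDeriv_zero, genFunLogDeriv_zero, hA, Nat.factorial_two]
    push_cast
    ring

/-- Jacobi into Laguerre: with `B = 1`, `C = α`, `A = ½(α+β+2)(1−x)`,
the coefficients of `e^{-Aw/(w-1)}(1-w)^{α+1} F(x,w)` satisfy `c₀ = 1`,
`c₁ = 0`, `c₂ = (1/8)[−α + 3β − 2(α+3β+4)x + (3α+3β+8)x²]`, where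
`F(x,w) = 2^{α+β}(1+R−w)^{−α}(1+R+w)^{−β}/R`, `R = √(1−2xw+w²)`. -/
theorem stmt_16 (α β x : ℂ) (P : ℕ → ℂ)
    (hP : ∀ᶠ w in 𝓝 (0:ℂ), HasSum (fun m => P m * w ^ m)
      ((2:ℂ) ^ (α + β) *
        (1 + (1 - 2 * x * w + w ^ 2) ^ ((1:ℂ)/2) - w) ^ (-α) *
        (1 + (1 - 2 * x * w + w ^ 2) ^ ((1:ℂ)/2) + w) ^ (-β) /
        (1 - 2 * x * w + w ^ 2) ^ ((1:ℂ)/2)))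
    (A : ℂ) (hA : A = (α + β + 2) * (1 - x) / 2)
    (c : ℕ → ℂ)
    (hc : ∀ᶠ w in 𝓝 (0:ℂ), HasSum (fun k => c k * w ^ k)
      (Complex.exp (-A * w / (w - 1)) * (1 - w) ^ (α + 1) *
        ((2:ℂ) ^ (α + β) *
          (1 + (1 - 2 * x * w + w ^ 2) ^ ((1:ℂ)/2) - w) ^ (-α) *
          (1 + (1 - 2 * x * w + w ^ 2) ^ ((1:ℂ)/2) + w) ^ (-β) /
          (1 - 2 * x * w + w ^ 2) ^ ((1:ℂ)/2)))) :
    c 0 = 1 ∧ c 1 = 0 ∧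
    c 2 = (-α + 3 * β - 2 * (α + 3 * β + 4) * x + (3 * α + 3 * β + 8) * x ^ 2) / 8 :=
  stmt_16_general α β x A hA c hc
end
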